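/- Let G be a geometry that is a direct sum G = G₁ ⊕ G₂ where G₁ is connected of rank at least two and G₂ is nonempty. Then G is simply connected, i.e., every cycle in the incidence graph of G based at any element is homotopically trivial under insertion/deletion of cycles of length at most 3. -/
import Mathlib


/-- Elementary homotopies of paths (given as lists of vertices) in a graph with
incidence relation `rel`: inserting a repetition, a return, or a triangle. -/
inductive ElemHtpy {X : Type*} (rel : X → X → Prop) : List X → List X → Prop
  | rep (p q : List X) (a : X) : ElemHtpy rel (p ++ a :: q) (p ++ a :: a :: q)
  | ret (p q : List X) (a b : X) (hab : rel a b) :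
      ElemHtpy rel (p ++ a :: q) (p ++ a :: b :: a :: q)
  | tri (p q : List X) (a b c : X) (hab : rel a b) (hbc : rel b c) (hca : rel c a) :
      ElemHtpy rel (p ++ a :: q) (p ++ a :: b :: c :: a :: q)

/-- Homotopy of paths: the equivalence relation generated by elementary homotopies. -/
def Homotopic {X : Type*} (rel : X → X → Prop) : List X → List X → Prop :=
  Relation.EqvGen (ElemHtpy rel)

/-- An incidence geometry over the type set `I` on the element set `X`:
a surjective type function, a reflexive symmetric incidence relation such that
incident elements of the same type are equal, and such that every flag
(set of pairwise incident elements) is contained in a chamber (a flag containing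
elements of every type). -/
structure Geom (I X : Type*) where
  typ : X → I
  typ_surj : Function.Surjective typ
  rel : X → X → Prop
  rel_refl : ∀ x, rel x x
  rel_symm : Symmetric rel
  eq_of_rel_typ : ∀ x y, rel x y → typ x = typ y → x = y
  flag_in_chamber : ∀ Fl : Set X, (∀ a ∈ Fl, ∀ b ∈ Fl, rel a b) →
    ∃ C : Set X, Fl ⊆ C ∧ (∀ a ∈ C, ∀ b ∈ C, rel a b) ∧ ∀ i : I, ∃ x ∈ C, typ x = i

/-- The incidence relation of the direct sum `G₁ ⊕ G₂`: incidence within each summand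
is unchanged and every element of `G₁` is incident with every element of `G₂`. -/
def sumRel {X₁ X₂ : Type*} (r₁ : X₁ → X₁ → Prop) (r₂ : X₂ → X₂ → Prop) :
    X₁ ⊕ X₂ → X₁ ⊕ X₂ → Prop
  | .inl a, .inl b => r₁ a b
  | .inr a, .inr b => r₂ a b
  | _, _ => True

section Aux

variable {X : Type*} {rel : X → X → Prop}

theorem htpyOfElem {l m : List X} (h : ElemHtpy rel l m) : Homotopic rel l m :=
  Relation.EqvGen.rel l m h

theorem htpyRefl (l : List X) : Homotopic rel l l := Relation.EqvGen.refl l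

theorem htpySymm {l m : List X} (h : Homotopic rel l m) : Homotopic rel m l :=
  Relation.EqvGen.symm l m h

theorem htpyTrans {l m n : List X} (h1 : Homotopic rel l m) (h2 : Homotopic rel m n) :
    Homotopic rel l n := Relation.EqvGen.trans l m n h1 h2

theorem elemAppendLeft (r : List X) {l m : List X} (h : ElemHtpy rel l m) :
    ElemHtpy rel (r ++ l) (r ++ m) := by
  cases h with
  | rep p q a => simpa [List.append_assoc] using ElemHtpy.rep (rel := rel) (r ++ p) q a
  | ret p q a b hab => simpa [List.append_assoc] using ElemHtpy.ret (r ++ p) q a b hab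
  | tri p q a b c hab hbc hca =>
      simpa [List.append_assoc] using ElemHtpy.tri (r ++ p) q a b c hab hbc hca

theorem htpyAppendLeft (r : List X) {l m : List X} (h : Homotopic rel l m) :
    Homotopic rel (r ++ l) (r ++ m) := by
  induction h with
  | rel x y h => exact htpyOfElem (elemAppendLeft r h)
  | refl x => exact htpyRefl _
  | symm x y _ ih => exact htpySymm ih
  | trans x y z _ _ ih1 ih2 => exact htpyTrans ih1 ih2

/-- Insert a middle vertex: `p ++ a::b::q ~ p ++ a::w::b::q` when `a,w,b` is a triangle. -/
theorem insertMid (hsymm : Symmetric rel) (p q : List X) (a w b : X)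
    (haw : rel a w) (hwb : rel w b) (hab : rel a b) :
    Homotopic rel (p ++ a :: b :: q) (p ++ a :: w :: b :: q) := by
  have h1 : ElemHtpy rel (p ++ a :: b :: q) (p ++ a :: w :: b :: a :: b :: q) :=
    ElemHtpy.tri p (b :: q) a w b haw hwb (hsymm hab)
  have h2 : ElemHtpy rel (p ++ a :: w :: b :: q) (p ++ a :: w :: b :: a :: b :: q) := by
    simpa [List.append_assoc] using ElemHtpy.ret (p ++ [a, w]) q b a (hsymm hab)
  exact htpyTrans (htpyOfElem h1) (htpySymm (htpyOfElem h2))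

end Aux

section Sum

variable {X₁ X₂ : Type*} {r₁ : X₁ → X₁ → Prop} {r₂ : X₂ → X₂ → Prop}

theorem sumRelSymm (h₁ : Symmetric r₁) (h₂ : Symmetric r₂) : Symmetric (sumRel r₁ r₂) := by
  intro x y h
  cases x <;> cases y <;> first | exact h₁ h | exact h₂ h | trivial

/-- Slide an `inl` vertex along a `G₁`-path, between two `inr` neighbours. -/
theorem slideLemma (h₁ : Symmetric r₁) (h₂ : Symmetric r₂)
    {u u' : X₁} (h : Relation.ReflTransGen r₁ u u') (α β : X₂) (p q : List (X₁ ⊕ X₂)) :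
    Homotopic (sumRel r₁ r₂) (p ++ .inr α :: .inl u :: .inr β :: q)
      (p ++ .inr α :: .inl u' :: .inr β :: q) := by
  induction h using Relation.ReflTransGen.head_induction_on with
  | refl => exact htpyRefl _
  | @head u d hud hdv ih =>
    have hsymm := sumRelSymm h₁ h₂
    have s1 : Homotopic (sumRel r₁ r₂)
        (p ++ .inr α :: .inl u :: .inr β :: q)
        (p ++ .inr α :: .inl u :: .inl d :: .inr β :: q) := by
      have h := insertMid hsymm (p ++ [Sum.inr α]) q (Sum.inl u) (Sum.inl d) (Sum.inr β)
          (show r₁ u d from hud) trivial trivial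
      simp only [List.append_assoc, List.singleton_append, List.cons_append,
        List.nil_append] at h
      exact h
    have s2 : Homotopic (sumRel r₁ r₂)
        (p ++ .inr α :: .inl d :: .inr β :: q)
        (p ++ .inr α :: .inl u :: .inl d :: .inr β :: q) := by
      exact insertMid hsymm p (Sum.inr β :: q) (Sum.inr α) (Sum.inl u) (Sum.inl d)
          trivial (show r₁ u d from hud) trivial
    exact htpyTrans (htpyTrans s1 (htpySymm s2)) ih

/-- Replace the middle `inr` vertex of an `inl`-`inr`-`inl` segment by any other `inr`
vertex, using connectivity of `G₁`. -/
theorem lrlLemma (h₁ : Symmetric r₁) (h₂ : Symmetric r₂)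
    {s v : X₁} (h : Relation.ReflTransGen r₁ s v) (y y₀ : X₂) (p q : List (X₁ ⊕ X₂)) :
    Homotopic (sumRel r₁ r₂) (p ++ .inl s :: .inr y :: .inl v :: q)
      (p ++ .inl s :: .inr y₀ :: .inl v :: q) := by
  induction h using Relation.ReflTransGen.head_induction_on generalizing p q with
  | refl =>
    have e1 : ElemHtpy (sumRel r₁ r₂) (p ++ .inl v :: q)
        (p ++ .inl v :: .inr y :: .inl v :: q) := ElemHtpy.ret p q _ _ trivial
    have e2 : ElemHtpy (sumRel r₁ r₂) (p ++ .inl v :: q)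
        (p ++ .inl v :: .inr y₀ :: .inl v :: q) := ElemHtpy.ret p q _ _ trivial
    exact htpyTrans (htpySymm (htpyOfElem e1)) (htpyOfElem e2)
  | @head s d hsd hdv ih =>
    have hsymm := sumRelSymm h₁ h₂
    have s1 : Homotopic (sumRel r₁ r₂)
        (p ++ .inl s :: .inr y :: .inl v :: q)
        (p ++ .inl s :: .inl d :: .inr y :: .inl v :: q) :=
      insertMid hsymm p (Sum.inl v :: q) (Sum.inl s) (Sum.inl d) (Sum.inr y)
        (show r₁ s d from hsd) trivial trivial
    have s2 : Homotopic (sumRel r₁ r₂)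
        (p ++ .inl s :: .inl d :: .inr y :: .inl v :: q)
        (p ++ .inl s :: .inl d :: .inr y₀ :: .inl v :: q) := by
      have h := ih (p ++ [Sum.inl s]) q
      simp only [List.append_assoc, List.singleton_append, List.cons_append,
        List.nil_append] at h
      exact h
    have s3 : Homotopic (sumRel r₁ r₂)
        (p ++ .inl s :: .inr y₀ :: .inl v :: q)
        (p ++ .inl s :: .inl d :: .inr y₀ :: .inl v :: q) :=
      insertMid hsymm p (Sum.inl v :: q) (Sum.inl s) (Sum.inl d) (Sum.inr y₀)
        (show r₁ s d from hsd) trivial trivial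
    exact htpyTrans (htpyTrans s1 s2) (htpySymm s3)

end Sum

section Key

variable {X₁ X₂ : Type*} {r₁ : X₁ → X₁ → Prop} {r₂ : X₂ → X₂ → Prop}

/-- Canonical middle of a normal-form path between two vertices of the sum. -/
def sumMid (x₁ : X₁) (y₀ : X₂) : X₁ ⊕ X₂ → X₁ ⊕ X₂ → List (X₁ ⊕ X₂)
  | .inl _, .inl _ => [.inr y₀]
  | .inr _, .inr _ => [.inl x₁]
  | _, _ => []

/-- Every path in the sum graph is homotopic to the canonical normal-form path
between its endpoints. -/
theorem keyLemma (h₁s : Symmetric r₁) (h₂s : Symmetric r₂) (h₁r : ∀ x, r₁ x x)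
    (hconn : ∀ a b : X₁, Relation.ReflTransGen r₁ a b) (x₁ : X₁) (y₀ : X₂) :
    ∀ (t : List (X₁ ⊕ X₂)) (a b : X₁ ⊕ X₂),
      List.Chain (sumRel r₁ r₂) a (t ++ [b]) →
      Homotopic (sumRel r₁ r₂) (a :: (t ++ [b])) (a :: sumMid x₁ y₀ a b ++ [b]) := by
  have hS := sumRelSymm h₁s h₂s
  intro t
  induction t with
  | nil =>
    intro a b hch
    have hab : sumRel r₁ r₂ a b := (List.chain_cons.mp hch).1
    match a, b with
    | .inl s, .inl v =>
      exact insertMid hS [] [] (Sum.inl s) (Sum.inr y₀) (Sum.inl v) trivial trivial hab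
    | .inl s, .inr v => exact htpyRefl _
    | .inr s, .inl v => exact htpyRefl _
    | .inr s, .inr v =>
      exact insertMid hS [] [] (Sum.inr s) (Sum.inl x₁) (Sum.inr v) trivial trivial hab
  | cons w t ih =>
    intro a b hch
    obtain ⟨haw, hch'⟩ := List.chain_cons.mp hch
    have step1 : Homotopic (sumRel r₁ r₂) (a :: ((w :: t) ++ [b]))
        (a :: w :: sumMid x₁ y₀ w b ++ [b]) := htpyAppendLeft [a] (ih w b hch')
    refine htpyTrans step1 ?_
    match a, w, b with
    | .inl s, .inl u, .inl v =>
      exact htpySymm (insertMid hS [] [Sum.inl v] (.inl s) (.inl u) (.inr y₀)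
        haw trivial trivial)
    | .inl s, .inl u, .inr v =>
      exact htpySymm (insertMid hS [] [] (.inl s) (.inl u) (.inr v) haw trivial trivial)
    | .inl s, .inr yw, .inl v =>
      exact lrlLemma h₁s h₂s (hconn s v) yw y₀ [] []
    | .inl s, .inr yw, .inr yb =>
      have s1 := slideLemma h₁s h₂s (hconn x₁ s) yw yb [Sum.inl s] []
      have s2 := htpySymm (insertMid hS [] [Sum.inr yb] (.inl s) (.inr yw) (.inl s)
        haw trivial (h₁r s))
      have s3 := htpySymm (htpyOfElem (ElemHtpy.rep (rel := sumRel r₁ r₂)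
        [] [Sum.inr yb] (Sum.inl s)))
      exact htpyTrans (htpyTrans s1 s2) s3
    | .inr ya, .inl u, .inl v =>
      have s1 := slideLemma h₁s h₂s (hconn u v) ya y₀ [] [Sum.inl v]
      have s2 := htpySymm (htpyOfElem (ElemHtpy.ret (rel := sumRel r₁ r₂)
        [Sum.inr ya] [] (Sum.inl v) (Sum.inr y₀) trivial))
      exact htpyTrans s1 s2
    | .inr ya, .inl u, .inr yb =>
      exact slideLemma h₁s h₂s (hconn u x₁) ya yb [] []
    | .inr ya, .inr yw, .inl v =>
      exact htpySymm (insertMid hS [] [] (.inr ya) (.inr yw) (.inl v) haw trivial trivial)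
    | .inr ya, .inr yw, .inr yb =>
      exact htpySymm (insertMid hS [] [Sum.inr yb] (.inr ya) (.inr yw) (.inl x₁)
        haw trivial trivial)

end Key


/-- If a geometry `G` is the direct sum `G₁ ⊕ G₂` with `G₁` connected of rank at
least two and `G₂` nonempty, then `G` is simply connected: every cycle in the
incidence graph of `G` based at any element is null-homotopic. -/
theorem directSum_simplyConnected {I₁ I₂ X₁ X₂ : Type*}
    (G₁ : Geom I₁ X₁) (G₂ : Geom I₂ X₂)
    (hconn : ∀ a b : X₁, Relation.ReflTransGen G₁.rel a b)
    (hrank : ∃ i j : I₁, i ≠ j) (hne : Nonempty X₂)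
    (c : List (X₁ ⊕ X₂)) (x : X₁ ⊕ X₂)
    (hchain : c.Chain' (sumRel G₁.rel G₂.rel))
    (hhead : c.head? = some x) (hlast : c.getLast? = some x) :
    Homotopic (sumRel G₁.rel G₂.rel) c [x] := by
  -- obtain base points
  obtain ⟨i, -, -⟩ := hrank
  obtain ⟨x₁, -⟩ := G₁.typ_surj i
  obtain ⟨y₀⟩ := hne
  match c, hchain, hhead, hlast with
  | [], _, hhead, _ => simp at hhead
  | [a], _, hhead, _ =>
    have ha : a = x := by simpa using hhead
    subst ha
    exact htpyRefl _
  | a :: w :: t', hchain, hhead, hlast =>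
    have ha : a = x := by simpa using hhead
    subst ha
    obtain ⟨t'', b, hwt⟩ : ∃ t'' b, w :: t' = t'' ++ [b] :=
      ⟨(w :: t').dropLast, (w :: t').getLast (by simp),
        (List.dropLast_append_getLast (by simp)).symm⟩
    have hb : a = b := by
      rw [show a :: w :: t' = (a :: t'') ++ [b] by rw [hwt, List.cons_append],
        List.getLast?_concat] at hlast
      exact (Option.some_inj.mp hlast).symm
    subst hb
    have hchain' : List.Chain (sumRel G₁.rel G₂.rel) a (t'' ++ [a]) := by
      rw [← hwt]; exact hchain
    have key := keyLemma G₁.rel_symm G₂.rel_symm G₁.rel_refl hconn x₁ y₀ t'' a a hchain'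
    have key' : Homotopic (sumRel G₁.rel G₂.rel) (a :: w :: t')
        (a :: sumMid x₁ y₀ a a ++ [a]) := by rw [hwt]; exact key
    refine htpyTrans key' ?_
    match a with
    | .inl s =>
      exact htpySymm (htpyOfElem (ElemHtpy.ret (rel := sumRel G₁.rel G₂.rel)
        [] [] (Sum.inl s) (Sum.inr y₀) trivial))
    | .inr y =>
      exact htpySymm (htpyOfElem (ElemHtpy.ret (rel := sumRel G₁.rel G₂.rel)
        [] [] (Sum.inr y) (Sum.inl x₁) trivial))
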